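/- For nonnegative integers $n > k$, the 2-adic valuation of $\Phi_n(k) = \frac{1}{n!}\sum_i\binom{n}{2i+1}(2i)^k$ is at least $\alpha(n) - 1 - \alpha(k)$, with equality if and only if $\binom{n-1-k}{k}$ is odd. -/

import Mathlib

/-- `Φ n k = (1/n!) ∑_i C(n, 2i+1) (2i)^k`, with the convention `0^0 = 1`. -/
def Phi (n k : ℕ) : ℚ :=
  (1 / (Nat.factorial n : ℚ)) *
    ∑ i ∈ Finset.range (n + 1), (Nat.choose n (2 * i + 1) : ℚ) * ((2 * i : ℕ) : ℚ) ^ k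

/-- `α n` is the number of 1's in the binary expansion of `n`. -/
def binAlpha (n : ℕ) : ℕ := (Nat.digits 2 n).sum

/-!
Since `(2i)^k = 2^k i^k`, expanding `i^k = ∑_j surj k j * C(i, j)` over the binomial basis reduces
`Φ` to the sums `B_n(j) = ∑_i C(n, 2i+1) C(i, j)`. These satisfy
`B_{n+2}(j+1) = 2 B_{n+1}(j+1) + B_n(j)` and hence equal `2^(n-1-2j) C(n-1-j, j)`, so that
`2^(k-n+1) n! Φ_n(k) = ∑_{j ≤ k} surj k j * 4^(k-j) * C(n-1-j, j)`.
Kummer's theorem applied to the fibre recurrence gives `2^(j - α k) ∣ surj k j`, so all terms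
with `j < k` are divisible by `2^(k - α k + 1)`, whereas the last one is `k! C(n-1-k, k)` and
`ν(k!) = k - α k` exactly (Legendre). Legendre's formula for `ν(n!)` then gives the valuation
of `Φ`.
-/

open Finset

lemma binAlpha_le (n : ℕ) : binAlpha n ≤ n := Nat.digit_sum_le 2 n

lemma padicValNat_two_factorial (n : ℕ) : padicValNat 2 n.factorial = n - binAlpha n := by
  simpa [binAlpha] using sub_one_mul_padicValNat_factorial (p := 2) n

lemma binAlpha_pos {n : ℕ} (hn : n ≠ 0) : 0 < binAlpha n := by
  have := padicValNat_factorial_lt_of_ne_zero 2 hn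
  rw [padicValNat_two_factorial] at this
  omega

lemma padicValNat_two_choose {k n : ℕ} (h : k ≤ n) :
    padicValNat 2 (n.choose k) = binAlpha k + binAlpha (n - k) - binAlpha n := by
  simpa [binAlpha] using sub_one_mul_padicValNat_choose_eq_sub_sum_digits (p := 2) h

lemma padicValNat_eq_iff_of_pow_dvd {p a n : ℕ} [Fact p.Prime] (h : p ^ a ∣ n) :
    (n ≠ 0 ∧ padicValNat p n = a) ↔ ¬p ^ (a + 1) ∣ n := by
  rw [padicValNat_dvd_iff] at h ⊢
  omega

/-- `surj k j` is the number of surjections from a `k`-set onto a `j`-set: in the recursive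
case, `m + 1` is the size of the fibre over one point of the target. -/
def surj : ℕ → ℕ → ℕ
  | k, 0 => if k = 0 then 1 else 0
  | k, j + 1 => ∑ m ∈ range k, k.choose (m + 1) * surj (k - m - 1) j

lemma surj_eq_zero_of_lt : ∀ {k j : ℕ}, k < j → surj k j = 0
  | _, 0, h => absurd h (Nat.not_lt_zero _)
  | k, j + 1, h => sum_eq_zero fun m hm => by
      rw [surj_eq_zero_of_lt (by simp only [mem_range] at hm; omega), mul_zero]

lemma surj_self : ∀ k, surj k k = k.factorial
  | 0 => rfl
  | k + 1 => by
    rw [surj, sum_eq_single 0 (fun m hm hm0 => by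
      rw [surj_eq_zero_of_lt (by simp only [mem_range] at hm; omega), mul_zero]) (by simp),
      Nat.sub_zero, Nat.add_sub_cancel, surj_self k, zero_add, Nat.choose_one_right,
      Nat.factorial_succ]

lemma sum_surj_mul_choose_of_le {k N : ℕ} (i : ℕ) (h : k + 1 ≤ N) :
    ∑ j ∈ range N, surj k j * i.choose j = ∑ j ∈ range (k + 1), surj k j * i.choose j :=
  (sum_subset (range_subset_range.2 h) fun j _ hj => by
    rw [surj_eq_zero_of_lt (by simpa using hj), zero_mul]).symm

lemma pow_eq_sum_surj_mul_choose (i : ℕ) :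
    ∀ k, i ^ k = ∑ j ∈ range (k + 1), surj k j * i.choose j := by
  induction i with
  | zero =>
    rintro (_ | k)
    · rfl
    · rw [sum_range_succ', sum_eq_zero (fun j _ => by simp)]
      simp [surj]
  | succ i ih =>
    intro k
    have binom : (i + 1) ^ k = ∑ m ∈ range k, k.choose (m + 1) * i ^ (k - m - 1) + i ^ k := by
      rw [add_comm, add_pow, sum_range_succ']
      simp only [one_pow, one_mul, Nat.sub_zero, Nat.choose_zero_right, Nat.cast_id, mul_one,
        Nat.sub_sub]
      exact congrArg (· + i ^ k) (sum_congr rfl fun m _ => mul_comm _ _)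
    have fibre : ∑ j ∈ range k, surj k (j + 1) * i.choose j
        = ∑ m ∈ range k, k.choose (m + 1) * i ^ (k - m - 1) := by
      simp only [surj, sum_mul, mul_assoc]
      rw [sum_comm]
      refine sum_congr rfl fun m hm => ?_
      rw [← mul_sum, sum_surj_mul_choose_of_le i (by simp only [mem_range] at hm; omega), ← ih]
    rw [binom, ← fibre, ih k, sum_range_succ' _ k, sum_range_succ' _ k]
    simp only [Nat.choose_succ_succ, mul_add, sum_add_distrib, Nat.choose_zero_right]
    ring

lemma two_pow_dvd_surj : ∀ j k, 2 ^ (j - binAlpha k) ∣ surj k j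
  | 0, _ => by simp
  | j + 1, k => dvd_sum fun m hm => by
    simp only [mem_range] at hm
    have hchoose := padicValNat_two_choose (show m + 1 ≤ k by omega)
    have hpos := binAlpha_pos (m.add_one_ne_zero)
    rw [show k - (m + 1) = k - m - 1 by omega] at hchoose
    calc 2 ^ (j + 1 - binAlpha k)
        ∣ 2 ^ (padicValNat 2 (k.choose (m + 1)) + (j - binAlpha (k - m - 1))) :=
          pow_dvd_pow 2 (by omega)
      _ ∣ k.choose (m + 1) * surj (k - m - 1) j := by
          rw [pow_add]
          exact mul_dvd_mul pow_padicValNat_dvd (two_pow_dvd_surj j _)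

def oddChooseSum (n j : ℕ) : ℕ := ∑ i ∈ range (n + 1), n.choose (2 * i + 1) * i.choose j

def evenChooseSum (n j : ℕ) : ℕ := ∑ i ∈ range (n + 1), n.choose (2 * i) * i.choose j

lemma sum_range_choose_mul_of_le {n N : ℕ} (g f : ℕ → ℕ) (hg : ∀ i, i ≤ g i)
    (h : n + 1 ≤ N) :
    ∑ i ∈ range N, n.choose (g i) * f i = ∑ i ∈ range (n + 1), n.choose (g i) * f i :=
  (sum_subset (range_subset_range.2 h) fun i _ hi => by
    rw [Nat.choose_eq_zero_of_lt (by simp only [mem_range] at hi; linarith [hg i]), zero_mul]).symm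

lemma oddChooseSum_succ (n j : ℕ) :
    oddChooseSum (n + 1) j = evenChooseSum n j + oddChooseSum n j := by
  rw [oddChooseSum, evenChooseSum, oddChooseSum,
    ← sum_range_choose_mul_of_le (n := n) (N := n + 2) (fun i => 2 * i) _ (by omega) (by omega),
    ← sum_range_choose_mul_of_le (n := n) (N := n + 2) (fun i => 2 * i + 1) _ (by omega)
      (by omega), ← sum_add_distrib]
  exact sum_congr rfl fun i _ => by rw [Nat.choose_succ_succ, add_mul]

lemma evenChooseSum_succ (n j : ℕ) : evenChooseSum (n + 1) j =
    evenChooseSum n j + ∑ i ∈ range (n + 1), n.choose (2 * i + 1) * (i + 1).choose j := by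
  rw [evenChooseSum, evenChooseSum,
    ← sum_range_choose_mul_of_le (n := n) (N := n + 2) (fun i => 2 * i) _ (by omega) (by omega),
    sum_range_succ' (fun i => (n + 1).choose (2 * i) * i.choose j),
    sum_range_succ' (fun i => n.choose (2 * i) * i.choose j) (n + 1)]
  simp only [mul_zero, Nat.choose_zero_right, mul_add_one, Nat.choose_succ_succ, add_mul,
    sum_add_distrib]
  ring

lemma oddChooseSum_add_two_zero (n : ℕ) :
    oddChooseSum (n + 2) 0 = 2 * oddChooseSum (n + 1) 0 := by
  rw [oddChooseSum_succ (n + 1), evenChooseSum_succ, oddChooseSum_succ n]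
  simp only [Nat.choose_zero_right, oddChooseSum]
  ring

lemma oddChooseSum_add_two_succ (n j : ℕ) :
    oddChooseSum (n + 2) (j + 1) = 2 * oddChooseSum (n + 1) (j + 1) + oddChooseSum n j := by
  rw [oddChooseSum_succ (n + 1), evenChooseSum_succ, oddChooseSum_succ n]
  simp only [Nat.choose_succ_succ, mul_add, sum_add_distrib, oddChooseSum]
  ring

lemma four_pow_mul_oddChooseSum :
    ∀ m j, 4 ^ j * oddChooseSum (m + 1) j = 2 ^ m * (m - j).choose j
  | 0, 0 | 1, 0 => rfl
  | 0, j + 1 | 1, j + 1 => by simp [oddChooseSum, sum_range_succ, Nat.choose_eq_zero_of_lt]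
  | m + 2, 0 => by
    have ih := four_pow_mul_oddChooseSum (m + 1) 0
    simp only [pow_zero, one_mul, Nat.choose_zero_right, mul_one] at ih ⊢
    rw [oddChooseSum_add_two_zero, ih, pow_succ]
    ring
  | m + 2, j + 1 => by
    rw [oddChooseSum_add_two_succ, mul_add, mul_left_comm, four_pow_mul_oddChooseSum (m + 1),
      pow_succ' 4 j, mul_assoc 4, four_pow_mul_oddChooseSum m j]
    rcases le_or_gt j m with hj | hj
    · rw [show m + 2 - (j + 1) = (m - j) + 1 by omega, show m + 1 - (j + 1) = m - j by omega,
        Nat.choose_succ_succ', pow_succ, pow_succ]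
      ring
    · rw [Nat.choose_eq_zero_of_lt (by omega : m + 2 - (j + 1) < j + 1),
        Nat.choose_eq_zero_of_lt (by omega : m + 1 - (j + 1) < j + 1),
        Nat.choose_eq_zero_of_lt (by omega : m - j < j)]
      ring

def surjChooseSum (m k : ℕ) : ℕ :=
  ∑ j ∈ range (k + 1), surj k j * 4 ^ (k - j) * (m - j).choose j

lemma four_pow_mul_sum_choose_mul_pow (m k : ℕ) :
    4 ^ k * ∑ i ∈ range (m + 2), (m + 1).choose (2 * i + 1) * i ^ k
      = 2 ^ m * surjChooseSum m k := by
  have hswap : ∑ i ∈ range (m + 2), (m + 1).choose (2 * i + 1) * i ^ k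
      = ∑ j ∈ range (k + 1), surj k j * oddChooseSum (m + 1) j := by
    simp only [pow_eq_sum_surj_mul_choose _ k, mul_sum, oddChooseSum]
    rw [sum_comm]
    exact sum_congr rfl fun j _ => sum_congr rfl fun i _ => by ring
  rw [hswap, surjChooseSum, mul_sum, mul_sum]
  refine sum_congr rfl fun j hj => ?_
  rw [← Nat.sub_add_cancel (show j ≤ k by simpa [Nat.lt_succ_iff] using hj), pow_add,
    Nat.add_sub_cancel, mul_mul_mul_comm, mul_comm (4 ^ (k - j)), four_pow_mul_oddChooseSum]
  ring

lemma two_pow_succ_dvd_sum_surj_lt (k : ℕ) (f : ℕ → ℕ) :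
    2 ^ (k - binAlpha k + 1) ∣ ∑ j ∈ range k, surj k j * 4 ^ (k - j) * f j :=
  dvd_sum fun j hj => by
    simp only [mem_range] at hj
    calc 2 ^ (k - binAlpha k + 1) ∣ 2 ^ (j - binAlpha k) * 2 ^ (2 * (k - j)) := by
          rw [← pow_add]; exact pow_dvd_pow 2 (by omega)
      _ ∣ surj k j * 4 ^ (k - j) * f j := by
          rw [pow_mul]
          exact dvd_mul_of_dvd_left (mul_dvd_mul (two_pow_dvd_surj j k) dvd_rfl) _

lemma two_pow_succ_dvd_factorial_mul_iff (k c : ℕ) :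
    2 ^ (k - binAlpha k + 1) ∣ k.factorial * c ↔ 2 ∣ c := by
  rcases eq_or_ne c 0 with rfl | hc
  · simp
  have htwo_dvd := pow_one 2 ▸ padicValNat_dvd_iff_le (p := 2) (n := 1) hc
  rw [htwo_dvd, padicValNat_dvd_iff_le (mul_ne_zero (Nat.factorial_ne_zero k) hc),
    padicValNat.mul (Nat.factorial_ne_zero k) hc, padicValNat_two_factorial]
  have := binAlpha_le k
  omega

lemma sum_surj_mul_eq_add_factorial_mul (k : ℕ) (f : ℕ → ℕ) :
    ∑ j ∈ range (k + 1), surj k j * 4 ^ (k - j) * f j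
      = ∑ j ∈ range k, surj k j * 4 ^ (k - j) * f j + k.factorial * f k := by
  rw [sum_range_succ, surj_self, Nat.sub_self, pow_zero, mul_one]

lemma two_pow_dvd_sum_surj (k : ℕ) (f : ℕ → ℕ) :
    2 ^ (k - binAlpha k) ∣ ∑ j ∈ range (k + 1), surj k j * 4 ^ (k - j) * f j := by
  rw [sum_surj_mul_eq_add_factorial_mul]
  exact dvd_add ((pow_dvd_pow 2 (Nat.le_succ _)).trans (two_pow_succ_dvd_sum_surj_lt k f))
    (dvd_mul_of_dvd_left (padicValNat_two_factorial k ▸ pow_padicValNat_dvd) _)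

lemma two_pow_succ_dvd_sum_surj_iff (k : ℕ) (f : ℕ → ℕ) :
    2 ^ (k - binAlpha k + 1) ∣ ∑ j ∈ range (k + 1), surj k j * 4 ^ (k - j) * f j ↔
      2 ∣ f k := by
  rw [sum_surj_mul_eq_add_factorial_mul, ← two_pow_succ_dvd_factorial_mul_iff,
    (Nat.dvd_add_right (two_pow_succ_dvd_sum_surj_lt k f))]

lemma Phi_succ_eq (m k : ℕ) :
    Phi (m + 1) k = 2 ^ m * surjChooseSum m k / (2 ^ k * (m + 1).factorial) := by
  have hS := congrArg (Nat.cast : ℕ → ℚ) (four_pow_mul_sum_choose_mul_pow m k)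
  push_cast at hS
  have htwo : ∑ i ∈ range (m + 2), ((m + 1).choose (2 * i + 1) : ℚ) * ((2 * i : ℕ) : ℚ) ^ k
      = 2 ^ k * ∑ i ∈ range (m + 2), ((m + 1).choose (2 * i + 1) : ℚ) * (i : ℚ) ^ k := by
    rw [mul_sum]
    exact sum_congr rfl fun i _ => by push_cast; ring
  rw [eq_div_iff (by positivity), Phi, htwo, ← hS,
    show (4 : ℚ) ^ k = 2 ^ k * 2 ^ k by rw [← mul_pow]; norm_num]
  field_simp

lemma Phi_succ_eq_zero_iff (m k : ℕ) : Phi (m + 1) k = 0 ↔ surjChooseSum m k = 0 := by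
  rw [Phi_succ_eq, div_eq_zero_iff, mul_eq_zero, Nat.cast_eq_zero]
  have : (2 : ℚ) ^ m ≠ 0 := by positivity
  have : (2 : ℚ) ^ k * (m + 1).factorial ≠ 0 := by positivity
  tauto

lemma padicValRat_Phi_succ {m k : ℕ} (hG : surjChooseSum m k ≠ 0) :
    padicValRat 2 (Phi (m + 1) k)
      = padicValNat 2 (surjChooseSum m k) + binAlpha (m + 1) - 1 - k := by
  have hfac := padicValNat_two_factorial (m + 1)
  have := binAlpha_le (m + 1)
  have htwo : padicValRat 2 2 = 1 := by simpa using padicValRat.self (p := 2) one_lt_two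
  rw [Phi_succ_eq, padicValRat.div (by positivity) (by positivity),
    padicValRat.mul (by positivity) (by exact_mod_cast hG),
    padicValRat.mul (by positivity) (by positivity), padicValRat.pow, padicValRat.pow, htwo,
    padicValRat.of_nat, padicValRat.of_nat, hfac]
  omega

theorem Phi_val_refined (n k : ℕ) (h : k < n) :
    (Phi n k = 0 ∨
        padicValRat 2 (Phi n k) ≥ (binAlpha n : ℤ) - 1 - binAlpha k) ∧
      ((Phi n k ≠ 0 ∧ padicValRat 2 (Phi n k) = (binAlpha n : ℤ) - 1 - binAlpha k) ↔
        Odd (Nat.choose (n - 1 - k) k)) := by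
  obtain ⟨m, rfl⟩ : ∃ m, n = m + 1 := ⟨n - 1, by omega⟩
  have hdvd : 2 ^ (k - binAlpha k) ∣ surjChooseSum m k := two_pow_dvd_sum_surj k _
  have hodd : ¬2 ^ (k - binAlpha k + 1) ∣ surjChooseSum m k ↔ Odd ((m - k).choose k) := by
    rw [surjChooseSum, two_pow_succ_dvd_sum_surj_iff, Nat.odd_iff, Nat.two_dvd_ne_zero]
  have hαk := binAlpha_le k
  rw [Nat.add_sub_cancel, ← hodd, ← padicValNat_eq_iff_of_pow_dvd hdvd, Ne,
    Phi_succ_eq_zero_iff, ← Ne]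
  constructor
  · refine (eq_or_ne (surjChooseSum m k) 0).imp id fun hG => ?_
    have := (padicValNat_dvd_iff_le hG).1 hdvd
    rw [padicValRat_Phi_succ hG]
    omega
  · exact and_congr_right fun hG => by rw [padicValRat_Phi_succ hG]; omega
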